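/- arXiv:2310.17146 — 9 statements merged into one kernel-verified Lean document; each statement's English description precedes it below -/
import Mathlib

section
/- In a finite contextual bandit where the common support assumption may fail, the bias of the importance sampling estimator (defined with the convention that samples (s,a) with π_b(a|s) = 0 never occur) equals E[v̂^IS] − v(π_e) = E_{s~d}[ −Σ_{a ∈ U(s)} π_e(a|s)·R̄(s,a) ], where U(s) = {a ∈ A : π_b(a|s) = 0} is the set of unsupported actions at s. -/
open Finset

/-- Bias of importance sampling without common support: it equals the negative
expected reward of the evaluation policy over the unsupported actions
`U(s) = {a : πb(a|s) = 0}`. -/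
theorem is_bias_without_support
    {S A : Type*} [Fintype S] [Fintype A]
    (d : S → ℝ) (Rbar : S → A → ℝ) (πb πe : S → A → ℝ)
    (hπb : ∀ s a, 0 ≤ πb s a) :
    (∑ s, d s * ∑ a, πb s a * ((πe s a / πb s a) * Rbar s a)) -
      (∑ s, d s * ∑ a, πe s a * Rbar s a) =
    ∑ s, d s * (- ∑ a ∈ univ.filter (fun a => πb s a = 0), πe s a * Rbar s a) := by
  rw [← Finset.sum_sub_distrib]
  refine Finset.sum_congr rfl fun s _ => ?_
  rw [← mul_sub]
  congr 1
  rw [← Finset.sum_sub_distrib]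
  rw [← Finset.sum_filter_add_sum_filter_not univ (fun a => πb s a = 0)]
  have h1 : ∑ a ∈ univ.filter (fun a => πb s a = 0),
      (πb s a * ((πe s a / πb s a) * Rbar s a) - πe s a * Rbar s a) =
      -∑ a ∈ univ.filter (fun a => πb s a = 0), πe s a * Rbar s a := by
    rw [← Finset.sum_neg_distrib]
    refine Finset.sum_congr rfl fun a ha => ?_
    simp only [mem_filter] at ha
    rw [ha.2]; ring
  have h2 : ∑ a ∈ univ.filter (fun a => ¬ πb s a = 0),
      (πb s a * ((πe s a / πb s a) * Rbar s a) - πe s a * Rbar s a) = 0 := by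
    refine Finset.sum_eq_zero fun a ha => ?_
    simp only [mem_filter] at ha
    rw [show πb s a * (πe s a / πb s a * Rbar s a) = πe s a * Rbar s a by
      field_simp [ha.2], sub_self]
  rw [h1, h2, add_zero]
end

section
/- In a finite contextual bandit satisfying common support, the variance of the IS estimator decomposes as Var[v̂^IS] = Var_{s~d}[V^{π_e}(s)] + E_{s~d}[ Var_{a~π_b(·|s)}[ρ(a|s)·R̄(s,a)] ] + E_{s~d} E_{a~π_b(·|s)}[ ρ(a|s)²·σ_R(s,a)² ], where V^{π_e}(s) = Σ_a π_e(a|s) R̄(s,a), ρ(a|s) = π_e(a|s)/π_b(a|s), and σ_R(s,a)² is the conditional variance of the reward given (s,a). -/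
open Finset

/-- Variance decomposition of the IS estimator in a finite contextual bandit
with common support.  The variance (second moment minus squared mean, where the
conditional second moment of the reward is `σR2 + Rbar²`) decomposes into
(i) the variance of `V^{πe}` over states, (ii) the expected variance over the
behavior action distribution of `ρ·Rbar`, and (iii) the expected `ρ²·σR2`. -/
theorem is_variance_decomposition
    {S A : Type*} [Fintype S] [Fintype A]
    (d : S → ℝ) (Rbar σR2 : S → A → ℝ) (πb πe : S → A → ℝ)
    (hd0 : ∀ s, 0 ≤ d s) (hd1 : ∑ s, d s = 1)
    (hπb0 : ∀ s a, 0 ≤ πb s a) (hπb1 : ∀ s, ∑ a, πb s a = 1)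
    (hπe0 : ∀ s a, 0 ≤ πe s a) (hπe1 : ∀ s, ∑ a, πe s a = 1)
    (hσ : ∀ s a, 0 ≤ σR2 s a)
    (hsupp : ∀ s a, 0 < πe s a → 0 < πb s a) :
    (∑ s, d s * ∑ a, πb s a *
        ((πe s a / πb s a) ^ 2 * (σR2 s a + Rbar s a ^ 2))) -
      (∑ s, d s * ∑ a, πb s a * ((πe s a / πb s a) * Rbar s a)) ^ 2 =
    ((∑ s, d s * (∑ a, πe s a * Rbar s a) ^ 2) -
        (∑ s, d s * ∑ a, πe s a * Rbar s a) ^ 2) +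
      (∑ s, d s * ((∑ a, πb s a * ((πe s a / πb s a) * Rbar s a) ^ 2) -
        (∑ a, πb s a * ((πe s a / πb s a) * Rbar s a)) ^ 2)) +
      (∑ s, d s * ∑ a, πb s a * ((πe s a / πb s a) ^ 2 * σR2 s a)) := by
  -- Key fact: per state, ∑ πb·(ρ·Rbar) = ∑ πe·Rbar thanks to common support.
  have hmean : ∀ s, ∑ a, πb s a * ((πe s a / πb s a) * Rbar s a)
      = ∑ a, πe s a * Rbar s a := by
    intro s
    refine Finset.sum_congr rfl fun a _ => ?_
    by_cases hb : πb s a = 0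
    · have he : πe s a = 0 := by
        by_contra h
        have : 0 < πe s a := lt_of_le_of_ne (hπe0 s a) (Ne.symm h)
        exact (hsupp s a this).ne' hb
      simp [hb, he]
    · field_simp
  -- Pointwise split of the second moment term.
  have hsplit : ∀ s, ∑ a, πb s a * ((πe s a / πb s a) ^ 2 * (σR2 s a + Rbar s a ^ 2))
      = (∑ a, πb s a * ((πe s a / πb s a) * Rbar s a) ^ 2)
        + ∑ a, πb s a * ((πe s a / πb s a) ^ 2 * σR2 s a) := by
    intro s
    rw [← Finset.sum_add_distrib]
    refine Finset.sum_congr rfl fun a _ => ?_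
    ring
  simp only [hsplit, hmean]
  simp only [mul_add, Finset.sum_add_distrib, mul_sub, Finset.sum_sub_distrib]
  ring
end

section
/- In a finite contextual bandit, suppose the annotation function G satisfies E_{g~G(s,a)}[g] = R̄(s,a) for all (s,a) (perfect annotation) and the augmented common support assumption holds (π_e(a|s) > 0 implies π_{b+}(a|s) > 0). Then the counterfactual-augmented IS estimator v̂^{C-IS} = w^a·(π_e(a|s)/π_{b+}(a|s))·r + Σ_{ã≠a} w^{ã}·(π_e(ã|s)/π_{b+}(ã|s))·g^{ã}, where weights w are independent of rewards and annotations given (s,a) with E[w^{ã} | s, a] = W̄(ã|s,a), satisfies E[v̂^{C-IS}] = v(π_e). -/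
open Finset

/-- Unbiasedness of the counterfactual-augmented IS estimator (C-IS): under
perfect annotations (`Gbar = Rbar`) and the augmented common support
assumption, the expectation of the C-IS estimator equals `v(πe)`.
`Wbar s a b'` is the average weight `W̄(b'|s,a)` given factual pair `(s,a)`, and
the augmented behavior policy is `πb+(b'|s) = Σ_c' W̄(b'|s,c') πb(c'|s)`. -/
theorem cis_unbiased
    {S A : Type*} [Fintype S] [Fintype A] [DecidableEq A]
    (d : S → ℝ) (Rbar Gbar : S → A → ℝ) (πb πe : S → A → ℝ)
    (Wbar : S → A → A → ℝ)
    (hπb0 : ∀ s a, 0 ≤ πb s a) (hπe0 : ∀ s a, 0 ≤ πe s a)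
    (hW0 : ∀ s a b', 0 ≤ Wbar s a b') (hW1 : ∀ s a, ∑ b', Wbar s a b' = 1)
    (hperfect : ∀ s a, Gbar s a = Rbar s a)
    (hsupp : ∀ s a, 0 < πe s a → 0 < ∑ c', Wbar s c' a * πb s c') :
    ∑ s, d s * ∑ a, πb s a *
        (Wbar s a a * (πe s a / (∑ c', Wbar s c' a * πb s c')) * Rbar s a +
          ∑ b' ∈ univ.erase a,
            Wbar s a b' * (πe s b' / (∑ c', Wbar s c' b' * πb s c')) * Gbar s b') =
      ∑ s, d s * ∑ a, πe s a * Rbar s a := by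
  refine Finset.sum_congr rfl fun s _ => ?_
  congr 1
  have h1 : ∀ a : A,
      Wbar s a a * (πe s a / (∑ c', Wbar s c' a * πb s c')) * Rbar s a +
        ∑ b' ∈ univ.erase a,
          Wbar s a b' * (πe s b' / (∑ c', Wbar s c' b' * πb s c')) * Gbar s b'
      = ∑ b', Wbar s a b' * (πe s b' / (∑ c', Wbar s c' b' * πb s c')) * Rbar s b' := by
    intro a
    simp only [hperfect]
    exact Finset.add_sum_erase univ
      (fun b' => Wbar s a b' * (πe s b' / (∑ c', Wbar s c' b' * πb s c')) * Rbar s b')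
      (mem_univ a)
  calc ∑ a, πb s a *
        (Wbar s a a * (πe s a / (∑ c', Wbar s c' a * πb s c')) * Rbar s a +
          ∑ b' ∈ univ.erase a,
            Wbar s a b' * (πe s b' / (∑ c', Wbar s c' b' * πb s c')) * Gbar s b')
      = ∑ a, ∑ b', πb s a *
          (Wbar s a b' * (πe s b' / (∑ c', Wbar s c' b' * πb s c')) * Rbar s b') := by
        refine Finset.sum_congr rfl fun a _ => ?_
        rw [h1 a, Finset.mul_sum]
    _ = ∑ b', (∑ a, Wbar s a b' * πb s a) *
          (πe s b' / (∑ c', Wbar s c' b' * πb s c')) * Rbar s b' := by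
        rw [Finset.sum_comm]
        refine Finset.sum_congr rfl fun b' _ => ?_
        rw [Finset.sum_mul, Finset.sum_mul]
        exact Finset.sum_congr rfl fun a _ => by ring
    _ = ∑ b', πe s b' * Rbar s b' := by
        refine Finset.sum_congr rfl fun b' _ => ?_
        by_cases hπ : 0 < πe s b'
        · have hDpos := hsupp s b' hπ
          field_simp
        · have h0 : πe s b' = 0 := le_antisymm (not_lt.mp hπ) (hπe0 s b')
          rw [h0]; simp
end

section
/- In a finite contextual bandit with perfect annotations (E_{g~G(s,a)}[g] = R̄(s,a) for all s,a) but with the augmented support assumption possibly violated, the bias of the counterfactual-augmented IS estimator equals E_{s~d}[ −Σ_{a ∈ U⁺(s)} π_e(a|s)·R̄(s,a) ], where U⁺(s) = {a : π_{b+}(a|s) = 0} is the set of actions unsupported even after augmentation. -/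
open Finset

/-- Bias of C-IS due to lack of support: with perfect annotations
(`Gbar = Rbar`) but possibly violated augmented support, the bias equals the
negative expected reward of `πe` over the actions unsupported even after
augmentation, `U⁺(s) = {a : πb+(a|s) = 0}`. -/
theorem cis_bias_due_to_support
    {S A : Type*} [Fintype S] [Fintype A] [DecidableEq A]
    (d : S → ℝ) (Rbar Gbar : S → A → ℝ) (πb πe : S → A → ℝ)
    (Wbar : S → A → A → ℝ)
    (hπb0 : ∀ s a, 0 ≤ πb s a) (hπe0 : ∀ s a, 0 ≤ πe s a)
    (hW0 : ∀ s a b', 0 ≤ Wbar s a b') (hW1 : ∀ s a, ∑ b', Wbar s a b' = 1)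
    (hperfect : ∀ s a, Gbar s a = Rbar s a) :
    (∑ s, d s * ∑ a, πb s a *
        (Wbar s a a * (πe s a / (∑ c', Wbar s c' a * πb s c')) * Rbar s a +
          ∑ b' ∈ univ.erase a,
            Wbar s a b' * (πe s b' / (∑ c', Wbar s c' b' * πb s c')) * Gbar s b')) -
      (∑ s, d s * ∑ a, πe s a * Rbar s a) =
    ∑ s, d s *
      (- ∑ a ∈ univ.filter (fun a => (∑ c', Wbar s c' a * πb s c') = 0),
          πe s a * Rbar s a) := by
  rw [← Finset.sum_sub_distrib]
  refine Finset.sum_congr rfl fun s _ => ?_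
  rw [← mul_sub]
  congr 1
  set P : A → ℝ := fun b => ∑ c', Wbar s c' b * πb s c' with hP
  have hX : (∑ a, πb s a *
        (Wbar s a a * (πe s a / P a) * Rbar s a +
          ∑ b' ∈ univ.erase a, Wbar s a b' * (πe s b' / P b') * Gbar s b'))
      = ∑ b', P b' * (πe s b' / P b') * Rbar s b' := by
    have h1 : ∀ a, (Wbar s a a * (πe s a / P a) * Rbar s a +
        ∑ b' ∈ univ.erase a, Wbar s a b' * (πe s b' / P b') * Gbar s b')
        = ∑ b', Wbar s a b' * (πe s b' / P b') * Rbar s b' := by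
      intro a
      rw [show (∑ b', Wbar s a b' * (πe s b' / P b') * Rbar s b')
          = Wbar s a a * (πe s a / P a) * Rbar s a +
            ∑ b' ∈ univ.erase a, Wbar s a b' * (πe s b' / P b') * Rbar s b' from
        (Finset.add_sum_erase _ _ (mem_univ a)).symm]
      simp [hperfect]
    simp_rw [h1, Finset.mul_sum]
    rw [Finset.sum_comm]
    refine Finset.sum_congr rfl fun b _ => ?_
    simp only [hP, Finset.sum_mul]
    exact Finset.sum_congr rfl fun a _ => by ring
  rw [hX]
  have hY : (∑ b', P b' * (πe s b' / P b') * Rbar s b')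
      = ∑ b' ∈ univ.filter (fun b => ¬ P b = 0), πe s b' * Rbar s b' := by
    rw [Finset.sum_filter]
    refine Finset.sum_congr rfl fun b _ => ?_
    by_cases h : P b = 0
    · simp [h]
    · rw [if_pos h, mul_comm (P b), div_mul_cancel₀ _ h]
  rw [hY]
  have h := Finset.sum_filter_add_sum_filter_not univ (fun b => P b = 0)
    (fun b => πe s b * Rbar s b)
  linarith
end

section
/- In a finite contextual bandit where the augmented common support assumption holds but annotations are imperfect with error ε_G(s,a) = E_{g~G(s,a)}[g] − R̄(s,a), the bias of the counterfactual-augmented IS estimator equals E_{s~d} E_{a~π_e(·|s)}[ δ_W(s,a)·ε_G(s,a) ], where δ_W(s,a) = 1 − W̄(a|s,a)·π_b(a|s)/π_{b+}(a|s). -/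
open Finset

/-- Bias of C-IS due to imperfect annotations: under augmented common support,
with annotation error `ε(s,a) = E[g | s,a] − Rbar(s,a)`, the bias equals
`E_{s~d} E_{a~πe}[δ_W(s,a)·ε(s,a)]`, where
`δ_W(s,a) = 1 − W̄(a|s,a)·πb(a|s)/πb+(a|s)`. -/
theorem cis_bias_due_to_imperfect_annotations
    {S A : Type*} [Fintype S] [Fintype A] [DecidableEq A]
    (d : S → ℝ) (Rbar ε : S → A → ℝ) (πb πe : S → A → ℝ)
    (Wbar : S → A → A → ℝ)
    (hπb0 : ∀ s a, 0 ≤ πb s a) (hπe0 : ∀ s a, 0 ≤ πe s a)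
    (hW0 : ∀ s a b', 0 ≤ Wbar s a b') (hW1 : ∀ s a, ∑ b', Wbar s a b' = 1)
    (hsupp : ∀ s a, 0 < πe s a → 0 < ∑ c', Wbar s c' a * πb s c') :
    (∑ s, d s * ∑ a, πb s a *
        (Wbar s a a * (πe s a / (∑ c', Wbar s c' a * πb s c')) * Rbar s a +
          ∑ b' ∈ univ.erase a,
            Wbar s a b' * (πe s b' / (∑ c', Wbar s c' b' * πb s c')) *
              (Rbar s b' + ε s b'))) -
      (∑ s, d s * ∑ a, πe s a * Rbar s a) =
    ∑ s, d s * ∑ a, πe s a *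
      ((1 - Wbar s a a * πb s a / (∑ c', Wbar s c' a * πb s c')) * ε s a) := by
  have key : ∀ s b, πe s b / (∑ c', Wbar s c' b * πb s c') *
      (∑ c', Wbar s c' b * πb s c') = πe s b := by
    intro s b
    by_cases h : (∑ c', Wbar s c' b * πb s c') = 0
    · rw [h, mul_zero]
      rcases (hπe0 s b).eq_or_lt with h' | h'
      · exact h'
      · exact absurd h (hsupp s b h').ne'
    · exact div_mul_cancel₀ _ h
  rw [← Finset.sum_sub_distrib]
  apply Finset.sum_congr rfl
  intro s _
  rw [← mul_sub]
  congr 1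
  have step : (∑ a, πb s a *
      (Wbar s a a * (πe s a / (∑ c', Wbar s c' a * πb s c')) * Rbar s a +
        ∑ b' ∈ univ.erase a,
          Wbar s a b' * (πe s b' / (∑ c', Wbar s c' b' * πb s c')) *
            (Rbar s b' + ε s b'))) =
      (∑ b, πe s b * (Rbar s b + ε s b)) -
        ∑ a, πe s a * (Wbar s a a * πb s a / (∑ c', Wbar s c' a * πb s c')) * ε s a := by
    simp only [Finset.sum_erase_eq_sub (Finset.mem_univ _)]
    have h1 : (∑ a, πb s a *
        (Wbar s a a * (πe s a / (∑ c', Wbar s c' a * πb s c')) * Rbar s a +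
          ((∑ b, Wbar s a b * (πe s b / (∑ c', Wbar s c' b * πb s c')) *
            (Rbar s b + ε s b)) -
            Wbar s a a * (πe s a / (∑ c', Wbar s c' a * πb s c')) *
              (Rbar s a + ε s a)))) =
        ∑ a, ((∑ b, πb s a * (Wbar s a b * (πe s b / (∑ c', Wbar s c' b * πb s c')) *
            (Rbar s b + ε s b))) -
          πe s a * (Wbar s a a * πb s a / (∑ c', Wbar s c' a * πb s c')) * ε s a) := by
      apply Finset.sum_congr rfl
      intro a _
      rw [mul_add, mul_sub, Finset.mul_sum]
      ring
    rw [h1, Finset.sum_sub_distrib]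
    congr 1
    rw [Finset.sum_comm]
    apply Finset.sum_congr rfl
    intro b _
    have h2 : (∑ a, πb s a * (Wbar s a b * (πe s b / (∑ c', Wbar s c' b * πb s c')) *
        (Rbar s b + ε s b))) =
        (πe s b / (∑ c', Wbar s c' b * πb s c') * (∑ c', Wbar s c' b * πb s c')) *
          (Rbar s b + ε s b) := by
      rw [Finset.mul_sum, Finset.sum_mul]
      apply Finset.sum_congr rfl
      intro a _
      ring
    rw [h2, key]
  rw [step, sub_sub, ← Finset.sum_add_distrib, ← Finset.sum_sub_distrib]
  apply Finset.sum_congr rfl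
  intro a _
  ring
end

section
/- In a finite contextual bandit with perfect annotations, if R̄(s,a) ≥ 0 for all (s,a), and there exists a pair (s₀,a₀) with d(s₀) > 0, π_b(a₀|s₀) = 0, π_{b+}(a₀|s₀) > 0, π_e(a₀|s₀) > 0, and R̄(s₀,a₀) > 0, then |Bias[v̂^{C-IS}]| < |Bias[v̂^{IS}]|, i.e., the counterfactual-augmented estimator has strictly smaller absolute bias than standard IS. -/
open Finset

/-- Sufficient condition for bias reduction: with perfect annotations,
nonnegative rewards, and a witness state-action pair `(s₀,a₀)` that is
unsupported by `πb` but supported by the augmented behavior policy `πbplus`,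
has positive probability under `d` and `πe`, and positive reward, the absolute
bias of C-IS is strictly smaller than that of standard IS. -/
theorem cis_bias_reduction
    {S A : Type*} [Fintype S] [Fintype A]
    (d : S → ℝ) (Rbar : S → A → ℝ) (πb πe πbplus : S → A → ℝ)
    (hd0 : ∀ s, 0 ≤ d s) (hR0 : ∀ s a, 0 ≤ Rbar s a)
    (hπe0 : ∀ s a, 0 ≤ πe s a)
    (hsub : ∀ s a, πbplus s a = 0 → πb s a = 0)
    (hwitness : ∃ s₀ a₀, 0 < d s₀ ∧ πb s₀ a₀ = 0 ∧ 0 < πbplus s₀ a₀ ∧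
      0 < πe s₀ a₀ ∧ 0 < Rbar s₀ a₀) :
    |∑ s, d s * (- ∑ a ∈ univ.filter (fun a => πbplus s a = 0),
        πe s a * Rbar s a)| <
    |∑ s, d s * (- ∑ a ∈ univ.filter (fun a => πb s a = 0),
        πe s a * Rbar s a)| := by
  obtain ⟨s₀, a₀, hds, hb, hbp, he, hr⟩ := hwitness
  set F : S → ℝ := fun s => d s * ∑ a ∈ univ.filter (fun a => πbplus s a = 0),
      πe s a * Rbar s a with hF
  set G : S → ℝ := fun s => d s * ∑ a ∈ univ.filter (fun a => πb s a = 0),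
      πe s a * Rbar s a with hG
  have hterm0 : ∀ s a, 0 ≤ πe s a * Rbar s a := fun s a =>
    mul_nonneg (hπe0 s a) (hR0 s a)
  have hF0 : ∀ s, 0 ≤ F s := fun s =>
    mul_nonneg (hd0 s) (Finset.sum_nonneg fun a _ => hterm0 s a)
  have hG0 : ∀ s, 0 ≤ G s := fun s =>
    mul_nonneg (hd0 s) (Finset.sum_nonneg fun a _ => hterm0 s a)
  have hle : ∀ s, F s ≤ G s := by
    intro s
    refine mul_le_mul_of_nonneg_left ?_ (hd0 s)
    refine Finset.sum_le_sum_of_subset_of_nonneg ?_ (fun a _ _ => hterm0 s a)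
    intro a ha
    simp only [mem_filter, mem_univ, true_and] at *
    exact hsub s a ha
  have hlt : F s₀ < G s₀ := by
    refine (mul_lt_mul_iff_right₀ hds).mpr ?_
    refine Finset.sum_lt_sum_of_subset ?_ (i := a₀) ?_ ?_
      (mul_pos he hr) (fun a _ _ => hterm0 s₀ a)
    · intro a ha
      simp only [mem_filter, mem_univ, true_and] at *
      exact hsub s₀ a ha
    · simp [hb]
    · simp [ne_of_gt hbp]
  have hsumlt : ∑ s, F s < ∑ s, G s :=
    Finset.sum_lt_sum (fun s _ => hle s) ⟨s₀, Finset.mem_univ s₀, hlt⟩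
  have hrw : ∀ (H : S → A → ℝ),
      (∑ s, d s * (- ∑ a ∈ univ.filter (fun a => H s a = 0), πe s a * Rbar s a))
      = - ∑ s, d s * ∑ a ∈ univ.filter (fun a => H s a = 0), πe s a * Rbar s a := by
    intro H
    rw [← Finset.sum_neg_distrib]
    exact Finset.sum_congr rfl fun s _ => by ring
  rw [hrw πbplus, hrw πb, abs_neg, abs_neg,
    abs_of_nonneg (Finset.sum_nonneg fun s _ => hF0 s),
    abs_of_nonneg (Finset.sum_nonneg fun s _ => hG0 s)]
  exact hsumlt
end

section
/- Under the augmented common support assumption, the weighted augmented importance ratio ρ⁺_W = w^a·(π_e(a|s)/π_{b+}(a|s)) + Σ_{ã≠a} w^{ã}·(π_e(ã|s)/π_{b+}(ã|s)) satisfies E[ρ⁺_W] = 1, where the expectation is over s ~ d, a ~ π_b(·|s), and weights w with conditional means W̄(·|s,a). -/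
open Finset

/-- Expectation of the weighted augmented importance ratio: under the augmented
common support assumption, `E[ρ⁺_W] = 1`, where
`ρ⁺_W = Σ_b' W̄(b'|s,a)·πe(b'|s)/πb+(b'|s)` (the factual action `a` included),
and the expectation is over `s ~ d` and `a ~ πb(·|s)`. -/
theorem augmented_importance_ratio_expectation_one
    {S A : Type*} [Fintype S] [Fintype A]
    (d : S → ℝ) (πb πe : S → A → ℝ) (Wbar : S → A → A → ℝ)
    (hd1 : ∑ s, d s = 1)
    (hπb0 : ∀ s a, 0 ≤ πb s a) (hπb1 : ∀ s, ∑ a, πb s a = 1)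
    (hπe0 : ∀ s a, 0 ≤ πe s a) (hπe1 : ∀ s, ∑ a, πe s a = 1)
    (hW0 : ∀ s a b', 0 ≤ Wbar s a b') (hW1 : ∀ s a, ∑ b', Wbar s a b' = 1)
    (hsupp : ∀ s a, 0 < πe s a → 0 < ∑ c', Wbar s c' a * πb s c') :
    ∑ s, d s * ∑ a, πb s a *
        ∑ b', Wbar s a b' * (πe s b' / (∑ c', Wbar s c' b' * πb s c')) = 1 := by
  have key : ∀ s, (∑ a, πb s a *
      ∑ b', Wbar s a b' * (πe s b' / (∑ c', Wbar s c' b' * πb s c'))) = 1 := by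
    intro s
    have h1 : (∑ a, πb s a *
        ∑ b', Wbar s a b' * (πe s b' / (∑ c', Wbar s c' b' * πb s c')))
        = ∑ b', (∑ c', Wbar s c' b' * πb s c') *
          (πe s b' / (∑ c', Wbar s c' b' * πb s c')) := by
      simp_rw [Finset.mul_sum, Finset.sum_mul]
      rw [Finset.sum_comm]
      congr 1; ext b'; congr 1; ext a; ring
    rw [h1]
    have h2 : ∀ b', (∑ c', Wbar s c' b' * πb s c') *
        (πe s b' / (∑ c', Wbar s c' b' * πb s c')) = πe s b' := by
      intro b'
      by_cases hD : (∑ c', Wbar s c' b' * πb s c') = 0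
      · have hpe : πe s b' = 0 := by
          by_contra h
          have := hsupp s b' (lt_of_le_of_ne (hπe0 s b') (Ne.symm h))
          exact absurd hD (ne_of_gt this)
        simp [hD, hpe]
      · field_simp
    simp_rw [h2]
    exact hπe1 s
  simp_rw [key, mul_one]
  exact hd1
end

section
/- Under the same assumptions (perfect annotations with σ_G = σ_R, full annotation availability, equal weights, full support of π_b), the variance of C*-IS is at most the variance of standard IS: Var[v̂^{C*-IS}] ≤ Var[v̂^{IS}]. Specifically, the difference Var[v̂^{IS}] − Var[v̂^{C*-IS}] = E_{s~d}[Var_{a~π_b(·|s)}[ρ(a|s)R̄(s,a)]] + E_{s~d}E_{a~π_b(·|s)}[(1−π_b(a|s))·ρ(a|s)²·σ_R(s,a)²] ≥ 0. -/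
open Finset

/-- Variance reduction of C*-IS: the variance of standard IS exceeds that of
C*-IS by `E_{s~d}[Var_{a~πb}[ρ·Rbar]] + E_{s~d}E_{a~πb}[(1−πb)·ρ²·σ2] ≥ 0`,
hence `Var[C*-IS] ≤ Var[IS]`. -/
theorem cstar_is_variance_reduction
    {S A : Type*} [Fintype S] [Fintype A]
    (d : S → ℝ) (Rbar σ2 : S → A → ℝ) (πb πe : S → A → ℝ)
    (hd0 : ∀ s, 0 ≤ d s)
    (hπbpos : ∀ s a, 0 < πb s a) (hπb1 : ∀ s, ∑ a, πb s a = 1)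
    (hσ : ∀ s a, 0 ≤ σ2 s a) :
    ((((∑ s, d s * (∑ a, πe s a * Rbar s a) ^ 2) -
          (∑ s, d s * ∑ a, πe s a * Rbar s a) ^ 2) +
        (∑ s, d s * ((∑ a, πb s a * ((πe s a / πb s a) * Rbar s a) ^ 2) -
          (∑ a, πb s a * ((πe s a / πb s a) * Rbar s a)) ^ 2)) +
        (∑ s, d s * ∑ a, πb s a * ((πe s a / πb s a) ^ 2 * σ2 s a))) -
      (((∑ s, d s * (∑ a, πe s a * Rbar s a) ^ 2) -
          (∑ s, d s * ∑ a, πe s a * Rbar s a) ^ 2) +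
        ∑ s, d s * ∑ a, πb s a *
          (πb s a * (πe s a / πb s a) ^ 2 * σ2 s a)) =
      (∑ s, d s * ((∑ a, πb s a * ((πe s a / πb s a) * Rbar s a) ^ 2) -
          (∑ a, πb s a * ((πe s a / πb s a) * Rbar s a)) ^ 2)) +
        ∑ s, d s * ∑ a, πb s a *
          ((1 - πb s a) * ((πe s a / πb s a) ^ 2 * σ2 s a))) ∧
    (0 ≤ (∑ s, d s * ((∑ a, πb s a * ((πe s a / πb s a) * Rbar s a) ^ 2) -
          (∑ a, πb s a * ((πe s a / πb s a) * Rbar s a)) ^ 2)) +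
        ∑ s, d s * ∑ a, πb s a *
          ((1 - πb s a) * ((πe s a / πb s a) ^ 2 * σ2 s a))) ∧
    ((((∑ s, d s * (∑ a, πe s a * Rbar s a) ^ 2) -
          (∑ s, d s * ∑ a, πe s a * Rbar s a) ^ 2) +
        ∑ s, d s * ∑ a, πb s a *
          (πb s a * (πe s a / πb s a) ^ 2 * σ2 s a)) ≤
      (((∑ s, d s * (∑ a, πe s a * Rbar s a) ^ 2) -
          (∑ s, d s * ∑ a, πe s a * Rbar s a) ^ 2) +
        (∑ s, d s * ((∑ a, πb s a * ((πe s a / πb s a) * Rbar s a) ^ 2) -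
          (∑ a, πb s a * ((πe s a / πb s a) * Rbar s a)) ^ 2)) +
        (∑ s, d s * ∑ a, πb s a * ((πe s a / πb s a) ^ 2 * σ2 s a)))) := by
  have hvar : ∀ s, 0 ≤ (∑ a, πb s a * ((πe s a / πb s a) * Rbar s a) ^ 2) -
      (∑ a, πb s a * ((πe s a / πb s a) * Rbar s a)) ^ 2 := by
    intro s
    have h := Finset.sum_sq_le_sum_mul_sum_of_sq_eq_mul Finset.univ
      (r := fun a => πb s a * ((πe s a / πb s a) * Rbar s a))
      (f := fun a => πb s a)
      (g := fun a => πb s a * ((πe s a / πb s a) * Rbar s a) ^ 2)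
      (fun a _ => (hπbpos s a).le)
      (fun a _ => mul_nonneg (hπbpos s a).le (sq_nonneg _))
      (fun a _ => by ring)
    rw [hπb1 s, one_mul] at h
    linarith
  have hterm : ∀ s a, 0 ≤ πb s a * ((1 - πb s a) * ((πe s a / πb s a) ^ 2 * σ2 s a)) := by
    intro s a
    have h1 : πb s a ≤ 1 := by
      rw [← hπb1 s]
      exact Finset.single_le_sum (fun a _ => (hπbpos s a).le) (Finset.mem_univ a)
    exact mul_nonneg (hπbpos s a).le (mul_nonneg (by linarith)
      (mul_nonneg (sq_nonneg _) (hσ s a)))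
  have heq : (∑ s, d s * ∑ a, πb s a * ((πe s a / πb s a) ^ 2 * σ2 s a)) -
      (∑ s, d s * ∑ a, πb s a * (πb s a * (πe s a / πb s a) ^ 2 * σ2 s a)) =
      ∑ s, d s * ∑ a, πb s a * ((1 - πb s a) * ((πe s a / πb s a) ^ 2 * σ2 s a)) := by
    rw [← Finset.sum_sub_distrib]
    refine Finset.sum_congr rfl fun s _ => ?_
    rw [← mul_sub, ← Finset.sum_sub_distrib]
    congr 1
    refine Finset.sum_congr rfl fun a _ => ?_
    ring
  have hnn : 0 ≤ (∑ s, d s * ((∑ a, πb s a * ((πe s a / πb s a) * Rbar s a) ^ 2) -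
        (∑ a, πb s a * ((πe s a / πb s a) * Rbar s a)) ^ 2)) +
      ∑ s, d s * ∑ a, πb s a * ((1 - πb s a) * ((πe s a / πb s a) ^ 2 * σ2 s a)) :=
    add_nonneg
      (Finset.sum_nonneg fun s _ => mul_nonneg (hd0 s) (hvar s))
      (Finset.sum_nonneg fun s _ => mul_nonneg (hd0 s)
        (Finset.sum_nonneg fun a _ => hterm s a))
  refine ⟨by linarith, hnn, by linarith⟩
end

section
/- In a finite-horizon MDP with horizon T, under the augmented common support assumption at every step and perfect sequential annotations (E_{g~G_t(s,a)}[g] = Q^{π_e}_{t:T}(s,a) for all s, a, t), the counterfactual-augmented per-decision importance sampling estimator defined recursively by v₀ = 0 and v_{T−t+1} = w_t^{a_t}·ρ_t^{a_t}·(r_t + γ·v_{T−t}) + Σ_{ã≠a_t} w_t^{ã}·ρ_t^{ã}·g_t^{ã}, with ρ_t^{ã} = π_e(ã|s_t)/π_{b+}(ã|s_t), satisfies E[v_T] = v(π_e), where trajectories are generated by the behavior policy π_b. -/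
open Finset

/-- Unbiasedness of C-PDIS in a finite-horizon MDP: under the augmented common
support assumption at every step and perfect sequential annotations (the
annotation mean equals `Q^{πe}` at the corresponding remaining horizon), the
expectation of the recursively-defined C-PDIS estimator over trajectories from
the behavior policy equals `v(πe)`.  Here `Q h` and `V h` are the evaluation
policy's value functions with `h` remaining steps, and `Ev h s` is the
conditional expectation of the estimator `v_h` started from state `s`. -/
theorem cpdis_unbiased
    {S A : Type*} [Fintype S] [Fintype A] [DecidableEq A]
    (d1 : S → ℝ) (P : S → A → S → ℝ) (Rbar : S → A → ℝ) (γ : ℝ) (T : ℕ)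
    (πb πe : S → A → ℝ) (Wbar : S → A → A → ℝ) (πbplus : S → A → ℝ)
    (hπbplus : ∀ s a, πbplus s a = ∑ c', Wbar s c' a * πb s c')
    (hπb0 : ∀ s a, 0 ≤ πb s a) (hπb1 : ∀ s, ∑ a, πb s a = 1)
    (hπe0 : ∀ s a, 0 ≤ πe s a)
    (hW0 : ∀ s a b', 0 ≤ Wbar s a b') (hW1 : ∀ s a, ∑ b', Wbar s a b' = 1)
    (hγ0 : 0 ≤ γ) (hγ1 : γ ≤ 1)
    (hsupp : ∀ s a, 0 < πe s a → 0 < πbplus s a)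
    (Q : ℕ → S → A → ℝ) (V : ℕ → S → ℝ) (Ev : ℕ → S → ℝ)
    (hQ0 : ∀ s a, Q 0 s a = 0)
    (hV : ∀ h s, V h s = ∑ a, πe s a * Q h s a)
    (hQ : ∀ h s a, Q (h + 1) s a = Rbar s a + γ * ∑ s', P s a s' * V h s')
    (hEv0 : ∀ s, Ev 0 s = 0)
    (hEv : ∀ h s, Ev (h + 1) s = ∑ a, πb s a *
        (Wbar s a a * (πe s a / πbplus s a) *
            (Rbar s a + γ * ∑ s', P s a s' * Ev h s') +
          ∑ b' ∈ univ.erase a,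
            Wbar s a b' * (πe s b' / πbplus s b') * Q (h + 1) s b')) :
    ∑ s, d1 s * Ev T s = ∑ s, d1 s * V T s := by
  have key : ∀ h s, Ev h s = V h s := by
    intro h
    induction h with
    | zero => intro s; rw [hEv0, hV]; simp [hQ0]
    | succ h ih =>
      intro s
      have hρ : ∀ b', πe s b' / πbplus s b' * πbplus s b' = πe s b' := by
        intro b'
        by_cases hz : πbplus s b' = 0
        · have hpe : πe s b' = 0 := by
            by_contra hne
            exact absurd hz
              (ne_of_gt (hsupp s b' (lt_of_le_of_ne (hπe0 s b') (Ne.symm hne))))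
          simp [hz, hpe]
        · field_simp
      calc Ev (h + 1) s
          = ∑ a, πb s a * ∑ b', Wbar s a b' * (πe s b' / πbplus s b') * Q (h + 1) s b' := by
            rw [hEv]
            refine Finset.sum_congr rfl fun a _ => ?_
            congr 1
            have hEvV : (∑ s', P s a s' * Ev h s') = ∑ s', P s a s' * V h s' :=
              Finset.sum_congr rfl fun s' _ => by rw [ih s']
            rw [hEvV, ← hQ]
            exact Finset.add_sum_erase univ (fun b' => Wbar s a b' * (πe s b' / πbplus s b') * Q (h + 1) s b') (mem_univ a)
        _ = ∑ b', ∑ a, πb s a * (Wbar s a b' * (πe s b' / πbplus s b') * Q (h + 1) s b') := by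
            simp_rw [Finset.mul_sum]
            rw [Finset.sum_comm]
        _ = ∑ b', πe s b' * Q (h + 1) s b' := by
            refine Finset.sum_congr rfl fun b' _ => ?_
            have h1 : (∑ a, πb s a * (Wbar s a b' * (πe s b' / πbplus s b') * Q (h + 1) s b'))
                = (∑ a, Wbar s a b' * πb s a) * ((πe s b' / πbplus s b') * Q (h + 1) s b') := by
              rw [Finset.sum_mul]
              exact Finset.sum_congr rfl fun a _ => by ring
            rw [h1, ← hπbplus s b']
            rw [show πbplus s b' * (πe s b' / πbplus s b' * Q (h + 1) s b')
                = (πe s b' / πbplus s b' * πbplus s b') * Q (h + 1) s b' by ring, hρ b']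
        _ = V (h + 1) s := (hV (h + 1) s).symm
  exact Finset.sum_congr rfl fun s _ => by rw [key T s]
end
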